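/- A Fitch map ε is type-C (i.e., explained by some edge-labeled tree satisfying condition (C)) if and only if its unique least-resolved tree (T_ε, λ_ε) satisfies condition (C). -/
import Mathlib


/-- A rooted phylogenetic tree with leaf set `L`: a finite vertex type `V`,
a root, a parent map (the root is its own parent), every vertex reaches the
root by iterating `parent`, the leaves are exactly the vertices without
children and are in bijection with `L`, and every inner vertex has at least
two children. -/
structure PhyloTree (L : Type) : Type 1 where
  V : Type
  fintypeV : Fintype V
  root : V
  parent : V → V
  leaf : L → V
  parent_root : parent root = root
  reach : ∀ v : V, ∃ n : ℕ, parent^[n] v = root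
  leaf_inj : Function.Injective leaf
  leaf_iff : ∀ v : V, (∀ u : V, parent u = v → u = v) ↔ ∃ x : L, leaf x = v
  phylo : ∀ v : V, (¬ ∃ x : L, leaf x = v) →
      ∃ u u' : V, u ≠ u' ∧ parent u = v ∧ parent u' = v ∧ u ≠ v ∧ u' ≠ v

namespace PhyloTree

variable {L : Type} (T : PhyloTree L)

/-- `v` is an ancestor (or equal) of `w`. -/
def anc (v w : T.V) : Prop := ∃ n : ℕ, T.parent^[n] w = v

def isLeaf (v : T.V) : Prop := ∃ x : L, T.leaf x = v

/-- The cluster `L(T(v))`: the set of leaves below `v`. -/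
def cluster (v : T.V) : Set L := {x : L | T.anc v (T.leaf x)}

/-- The cluster system `H(T)`. -/
def clusters : Set (Set L) := Set.range T.cluster

/-- `w` is the last common ancestor of the leaves `x` and `y`. -/
def isLCA (x y : L) (w : T.V) : Prop :=
  T.anc w (T.leaf x) ∧ T.anc w (T.leaf y) ∧
    ∀ u : T.V, T.anc u (T.leaf x) → T.anc u (T.leaf y) → T.anc u w

/-- `u` is a child of `v`. -/
def childOf (u v : T.V) : Prop := T.parent u = v ∧ u ≠ v

/-- The edge `{parent u, u}` (encoded by its lower endpoint `u`) is an inner edge. -/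
def innerEdge (u : T.V) : Prop := T.parent u ≠ u ∧ ¬ T.isLeaf u

/-- The edge `{parent u, u}` lies on the path from the vertex `w` down to the leaf `y`. -/
def onPath (w : T.V) (y : L) (u : T.V) : Prop :=
  T.anc w u ∧ u ≠ w ∧ T.anc u (T.leaf y)

/-- The vertex-labeled tree `(T,t)` explains `δ`. -/
def ExplainsDelta {M : Type} (t : T.V → M) (δ : L → L → M) : Prop :=
  ∀ x y : L, x ≠ y → ∀ w : T.V, T.isLCA x y w → t w = δ x y

/-- The edge-labeled tree `(T,λ)` explains `ε`; edge labels are encoded on the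
lower endpoint of each edge. -/
def ExplainsEps {N : Type} (lam : T.V → Finset N) (ε : L → L → Finset N) : Prop :=
  ∀ x y : L, x ≠ y → ∀ w : T.V, T.isLCA x y w →
    ∀ k : N, k ∈ ε x y ↔ ∃ u : T.V, T.onPath w y u ∧ k ∈ lam u

/-- The vertex labeling is discriminating: the endpoints of every inner edge
carry distinct labels. -/
def Discriminating {M : Type} (t : T.V → M) : Prop :=
  ∀ u : T.V, T.innerEdge u → t u ≠ t (T.parent u)

/-- Total number of labels over all edges, `Σ_{e ∈ E(T)} |λ(e)|`. -/
noncomputable def labelSum {N : Type} (lam : T.V → Finset N) : ℕ :=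
  letI := T.fintypeV
  letI := Classical.decEq T.V
  ∑ v : T.V, if T.parent v = v then 0 else (lam v).card

/-- Condition (C): every inner vertex has a child joined by an empty-labeled edge. -/
def CondC {N : Type} (lam : T.V → Finset N) : Prop :=
  ∀ v : T.V, ¬ T.isLeaf v → ∃ u : T.V, T.childOf u v ∧ lam u = ∅

/-- Condition (C1): if `t(v) ∈ M₀` then all edges from `v` to its children are empty. -/
def CondC1 {M N : Type} (t : T.V → M) (lam : T.V → Finset N) (M0 : Set M) : Prop :=
  ∀ v u : T.V, T.childOf u v → t v ∈ M0 → lam u = ∅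

/-- Condition (C2): at every vertex, at most one edge to a child is nonempty. -/
def CondC2 {N : Type} (lam : T.V → Finset N) : Prop :=
  ∀ v u u' : T.V, T.childOf u v → T.childOf u' v → lam u ≠ ∅ → lam u' ≠ ∅ → u = u'

/-- `(T1,λ1) ≤ (T2,λ2)`: the edge-labeled tree `(T2,λ2)` refines `(T1,λ1)`. -/
def LeLabeled {N : Type} (T1 : PhyloTree L) (lam1 : T1.V → Finset N)
    (T2 : PhyloTree L) (lam2 : T2.V → Finset N) : Prop :=
  T1.clusters ⊆ T2.clusters ∧
    ∀ (v1 : T1.V) (v2 : T2.V), T1.parent v1 ≠ v1 → T2.parent v2 ≠ v2 →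
      T1.cluster v1 = T2.cluster v2 → lam1 v1 ⊆ lam2 v2

/-- `φ` witnesses that `T'` is obtained from `T` by contracting the inner edge
`{parent u, u}`. -/
def IsContractionMap (T : PhyloTree L) (u : T.V) (T' : PhyloTree L)
    (φ : T.V → T'.V) : Prop :=
  T.innerEdge u ∧ Function.Surjective φ ∧ φ u = φ (T.parent u) ∧
    (∀ a b : T.V, φ a = φ b →
      a = b ∨ (a = u ∧ b = T.parent u) ∨ (b = u ∧ a = T.parent u)) ∧
    (∀ v : T.V, v ≠ u → T'.parent (φ v) = φ (T.parent v)) ∧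
    (∀ x : L, φ (T.leaf x) = T'.leaf x) ∧ φ T.root = T'.root

/-- `T'` is obtained from `T` by contracting the inner edge `{parent u, u}`. -/
def ContractEdge (T : PhyloTree L) (u : T.V) (T' : PhyloTree L) : Prop :=
  ∃ φ : T.V → T'.V, IsContractionMap T u T' φ

/-- Isomorphism of rooted trees on the same leaf set. -/
def Isomorphic (T1 T2 : PhyloTree L) : Prop :=
  ∃ φ : T1.V ≃ T2.V, (∀ v : T1.V, φ (T1.parent v) = T2.parent (φ v)) ∧
    ∀ x : L, φ (T1.leaf x) = T2.leaf x

def IsSymbolicUltrametric {M : Type} (δ : L → L → M) : Prop :=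
  ∃ (T : PhyloTree L) (t : T.V → M), T.ExplainsDelta t δ

def IsFitchMap {N : Type} (ε : L → L → Finset N) : Prop :=
  ∃ (T : PhyloTree L) (lam : T.V → Finset N), T.ExplainsEps lam ε

def TreeLike {M N : Type} (δ : L → L → M) (ε : L → L → Finset N) : Prop :=
  ∃ (T : PhyloTree L) (t : T.V → M) (lam : T.V → Finset N),
    T.ExplainsDelta t δ ∧ T.ExplainsEps lam ε

def MTreeLike {M N : Type} (δ : L → L → M) (ε : L → L → Finset N) (M0 : Set M) : Prop :=
  ∃ (T : PhyloTree L) (t : T.V → M) (lam : T.V → Finset N),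
    T.ExplainsDelta t δ ∧ T.ExplainsEps lam ε ∧ T.CondC lam ∧ T.CondC1 t lam M0

end PhyloTree

/-- A hierarchy on `L`. -/
def IsHierarchy {L : Type} (H : Set (Set L)) : Prop :=
  Set.univ ∈ H ∧ (∀ x : L, {x} ∈ H) ∧
    (∀ A ∈ H, ∀ B ∈ H, A ∩ B = A ∨ A ∩ B = B ∨ A ∩ B = (∅ : Set L)) ∧
    (∅ : Set L) ∉ H
namespace PhyloTree

variable {L : Type} {T : PhyloTree L}

lemma anc_refl (v : T.V) : T.anc v v := ⟨0, rfl⟩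

lemma anc_trans {a b c : T.V} (h1 : T.anc a b) (h2 : T.anc b c) : T.anc a c := by
  obtain ⟨n, hn⟩ := h1; obtain ⟨m, hm⟩ := h2
  exact ⟨n + m, by rw [Function.iterate_add_apply, hm, hn]⟩

lemma root_iter (n : ℕ) : T.parent^[n] T.root = T.root := by
  induction n with
  | zero => rfl
  | succ n ih => rw [Function.iterate_succ_apply, T.parent_root, ih]

lemma anc_antisymm {a b : T.V} (h1 : T.anc a b) (h2 : T.anc b a) : a = b := by
  obtain ⟨n, hn⟩ := h1; obtain ⟨m, hm⟩ := h2
  rcases Nat.eq_zero_or_pos (m + n) with h | h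
  · have hn0 : n = 0 := by omega
    subst hn0; exact hn.symm
  · have hper : ∀ t : ℕ, T.parent^[(m + n) * t] b = b := by
      intro t
      induction t with
      | zero => rfl
      | succ t ih =>
        have : (m + n) * (t + 1) = (m + n) * t + (m + n) := by ring
        rw [this, Function.iterate_add_apply, Function.iterate_add_apply, hn, hm, ih]
    obtain ⟨K, hK⟩ := T.reach b
    have hge : K ≤ (m + n) * (K + 1) := by nlinarith
    have hb : b = T.root := by
      have h1 := hper (K + 1)
      rw [show (m + n) * (K + 1) = ((m + n) * (K + 1) - K) + K from (Nat.sub_add_cancel hge).symm,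
        Function.iterate_add_apply, hK, root_iter] at h1
      exact h1.symm
    subst hb
    rw [root_iter] at hn
    exact hn.symm

lemma anc_comparable {a b z : T.V} (h1 : T.anc a z) (h2 : T.anc b z) :
    T.anc a b ∨ T.anc b a := by
  obtain ⟨n, hn⟩ := h1; obtain ⟨m, hm⟩ := h2
  rcases le_total n m with h | h
  · right
    exact ⟨m - n, by rw [← hn, ← Function.iterate_add_apply, Nat.sub_add_cancel h, hm]⟩
  · left
    exact ⟨n - m, by rw [← hm, ← Function.iterate_add_apply, Nat.sub_add_cancel h, hn]⟩

lemma cluster_mono {a b : T.V} (h : T.anc a b) : T.cluster b ⊆ T.cluster a :=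
  fun _ hx => anc_trans h hx

lemma anc_of_child {u v : T.V} (h : T.parent u = v) : T.anc v u :=
  ⟨1, by simpa using h⟩

lemma leaf_fix {w : T.V} (hL : T.isLeaf w) : ∀ (n : ℕ) (z : T.V), T.parent^[n] z = w → z = w := by
  intro n
  induction n with
  | zero => intro z h; exact h
  | succ n ih =>
    intro z h
    rw [Function.iterate_succ_apply] at h
    exact (T.leaf_iff w).mpr hL z (ih _ h)

lemma cluster_leaf (x : L) : T.cluster (T.leaf x) = {x} := by
  ext y
  constructor
  · intro hy
    obtain ⟨n, hn⟩ := hy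
    exact T.leaf_inj (leaf_fix ⟨x, rfl⟩ n _ hn)
  · rintro rfl
    exact anc_refl _

lemma anc_child_cases {w u z : T.V} (hu : T.parent u = w) (h : T.anc z u) :
    z = u ∨ T.anc z w := by
  obtain ⟨t, ht⟩ := h
  cases t with
  | zero => exact Or.inl ht.symm
  | succ t =>
    right
    exact ⟨t, by rw [← ht, Function.iterate_succ_apply, hu]⟩

lemma desc_ssubset {u v : T.V} (h : T.childOf u v) :
    {z | T.anc u z} ⊂ {z | T.anc v z} := by
  rw [Set.ssubset_iff_subset_ne]
  constructor
  · intro z hz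
    exact anc_trans (anc_of_child h.1) hz
  · intro heq
    have hv : v ∈ {z | T.anc u z} := by rw [heq]; exact anc_refl v
    exact h.2 (anc_antisymm hv (anc_of_child h.1))

lemma exists_leaf_below_aux : ∀ (n : ℕ) (w : T.V), {z | T.anc w z}.ncard ≤ n →
    ∃ x : L, T.anc w (T.leaf x) := by
  haveI := T.fintypeV
  intro n
  induction n with
  | zero =>
    intro w h
    exfalso
    have h1 : 0 < {z | T.anc w z}.ncard :=
      (Set.ncard_pos (Set.toFinite _)).mpr ⟨w, anc_refl w⟩
    omega
  | succ n ih =>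
    intro w h
    by_cases hw : T.isLeaf w
    · obtain ⟨x, hx⟩ := hw
      exact ⟨x, hx ▸ anc_refl _⟩
    · obtain ⟨u, u', _, hu, _, hnev, _⟩ := T.phylo w hw
      have hlt := Set.ncard_lt_ncard (desc_ssubset ⟨hu, hnev⟩) (Set.toFinite _)
      obtain ⟨x, hx⟩ := ih u (by omega)
      exact ⟨x, anc_trans (anc_of_child hu) hx⟩

lemma exists_leaf_below (w : T.V) : ∃ x : L, T.anc w (T.leaf x) :=
  exists_leaf_below_aux {z | T.anc w z}.ncard w le_rfl

lemma path_child {v : T.V} {x : L} (h : T.anc v (T.leaf x)) (hne : T.leaf x ≠ v) :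
    ∃ u : T.V, T.parent u = v ∧ u ≠ v ∧ T.anc u (T.leaf x) ∧
      ∀ z : T.V, T.anc v z → z ≠ v → T.anc z (T.leaf x) → T.anc u z := by
  classical
  have hex : ∃ n : ℕ, T.parent^[n] (T.leaf x) = v := h
  have hn : T.parent^[Nat.find hex] (T.leaf x) = v := Nat.find_spec hex
  have hn0 : Nat.find hex ≠ 0 := by
    intro h0
    exact hne (by rw [← hn, h0]; rfl)
  obtain ⟨m, hm⟩ : ∃ m : ℕ, Nat.find hex = m + 1 := ⟨Nat.find hex - 1, by omega⟩
  rw [hm] at hn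
  refine ⟨T.parent^[m] (T.leaf x), ?_, ?_, ⟨m, rfl⟩, ?_⟩
  · have hiter := Function.iterate_succ_apply' T.parent m (T.leaf x)
    rw [← hiter]
    exact hn
  · intro heq
    exact Nat.find_min hex (by omega : m < Nat.find hex) heq
  · intro z hvz hzv hzx
    obtain ⟨k, hk⟩ := hzx
    have hkm : k ≤ m := by
      by_contra hlt
      have : T.parent^[k - (m + 1)] v = z := by
        rw [← hn, ← Function.iterate_add_apply]
        rw [show k - (m + 1) + (m + 1) = k by omega, hk]
      exact hzv (anc_antisymm ⟨k - (m + 1), this⟩ hvz)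
    exact ⟨m - k, by rw [← hk, ← Function.iterate_add_apply, Nat.sub_add_cancel hkm]⟩

lemma anc_child_eq {v u c : T.V} (hu : T.childOf u v) (hc : T.childOf c v)
    (h : T.anc u c) : u = c := by
  rcases anc_child_cases hc.1 h with h' | h'
  · exact h'
  · exact absurd (anc_antisymm h' (anc_of_child hu.1)) hu.2

lemma sibling_leaf {v u : T.V} (hv : ¬ T.isLeaf v) (hu : T.childOf u v) :
    ∃ y : L, y ∈ T.cluster v ∧ y ∉ T.cluster u := by
  obtain ⟨a, b, hab, ha, hb, hav, hbv⟩ := T.phylo v hv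
  obtain ⟨c, hc, hcu⟩ : ∃ c : T.V, T.childOf c v ∧ c ≠ u := by
    rcases eq_or_ne a u with rfl | hau
    · exact ⟨b, ⟨hb, hbv⟩, fun h => hab h.symm⟩
    · exact ⟨a, ⟨ha, hav⟩, hau⟩
  obtain ⟨y, hy⟩ := exists_leaf_below c
  refine ⟨y, anc_trans (anc_of_child hc.1) hy, ?_⟩
  intro hyu
  rcases anc_comparable (z := T.leaf y) hyu hy with h | h
  · exact hcu (anc_child_eq hu hc h).symm
  · exact hcu (anc_child_eq hc hu h)

lemma isLCA_above {v : T.V} {x y : L} (hx : T.anc v (T.leaf x)) (hy : T.anc v (T.leaf y))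
    {u : T.V}
    (humin : ∀ z : T.V, T.anc v z → z ≠ v → T.anc z (T.leaf x) → T.anc u z)
    (hyu : ¬ T.anc u (T.leaf y)) : T.isLCA y x v := by
  refine ⟨hy, hx, ?_⟩
  intro z hzy hzx
  rcases anc_comparable hzx hx with h | h
  · exact h
  · rcases eq_or_ne z v with rfl | hne
    · exact anc_refl _
    · exact absurd (anc_trans (humin z h hne hzx) hzy) hyu

lemma chain_aux {N : Type} {lam : T.V → Finset N} (hC : T.CondC lam) :
    ∀ (n : ℕ) (w : T.V), {z | T.anc w z}.ncard ≤ n →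
      ∃ x : L, T.anc w (T.leaf x) ∧ ∀ p : T.V, T.onPath w x p → lam p = ∅ := by
  haveI := T.fintypeV
  intro n
  induction n with
  | zero =>
    intro w h
    exfalso
    have h1 : 0 < {z | T.anc w z}.ncard :=
      (Set.ncard_pos (Set.toFinite _)).mpr ⟨w, anc_refl w⟩
    omega
  | succ n ih =>
    intro w h
    by_cases hw : T.isLeaf w
    · obtain ⟨x, rfl⟩ := hw
      refine ⟨x, anc_refl _, ?_⟩
      rintro p ⟨hwp, hpw, _⟩
      obtain ⟨j, hj⟩ := hwp
      exact absurd (leaf_fix ⟨x, rfl⟩ j p hj) hpw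
    · obtain ⟨u, hcu, hlam⟩ := hC w hw
      have hlt := Set.ncard_lt_ncard (desc_ssubset hcu) (Set.toFinite _)
      obtain ⟨x, hx, hpath⟩ := ih u (by omega)
      refine ⟨x, anc_trans (anc_of_child hcu.1) hx, ?_⟩
      rintro p ⟨hwp, hpw, hpx⟩
      rcases anc_comparable hpx hx with h' | h'
      · rcases anc_child_cases hcu.1 h' with rfl | h''
        · exact hlam
        · exact absurd (anc_antisymm h'' hwp) hpw
      · rcases eq_or_ne p u with rfl | hne
        · exact hlam
        · exact hpath p ⟨h', hne, hpx⟩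

end PhyloTree

/-- A Fitch map `ε` is type-C (explained by some edge-labeled
tree satisfying (C)) iff its unique least-resolved tree `(T_ε,λ_ε)` satisfies (C). -/
theorem statement15 {L N : Type} (ε : L → L → Finset N) (Tε : PhyloTree L)
    (lamε : Tε.V → Finset N) (hexp : Tε.ExplainsEps lamε ε)
    (hleast : ∀ (T : PhyloTree L) (lam : T.V → Finset N),
      T.ExplainsEps lam ε → PhyloTree.LeLabeled Tε lamε T lam) :
    (∃ (T : PhyloTree L) (lam : T.V → Finset N),
        T.ExplainsEps lam ε ∧ T.CondC lam) ↔ Tε.CondC lamε := by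
  constructor
  · rintro ⟨T, lam, hT, hC⟩ v hv
    obtain ⟨hcl, -⟩ := hleast T lam hT
    -- the vertex of T with the same cluster as v
    obtain ⟨w, hw⟩ := hcl ⟨v, rfl⟩
    -- a leaf below w in T whose whole path from w is empty-labeled
    obtain ⟨x, hwx, hpathT⟩ := PhyloTree.chain_aux hC {z | T.anc w z}.ncard w le_rfl
    have hxw : x ∈ T.cluster w := hwx
    have hxv : x ∈ Tε.cluster v := hw ▸ hxw
    have hlxv : Tε.leaf x ≠ v := by
      rintro rfl
      exact hv ⟨x, rfl⟩
    -- the child of v above x in Tε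
    obtain ⟨u, hpu, hune, hux, humin⟩ := PhyloTree.path_child hxv hlxv
    have hxu : x ∈ Tε.cluster u := hux
    -- a sibling leaf in Tε : y' below v but not below u
    obtain ⟨y', hy'v, hy'u⟩ := PhyloTree.sibling_leaf hv ⟨hpu, hune⟩
    have hxy' : x ≠ y' := fun h => hy'u (h ▸ hxu)
    -- w is not a leaf of T
    have hwleaf : ¬ T.isLeaf w := by
      rintro ⟨x', rfl⟩
      rw [PhyloTree.cluster_leaf] at hw
      have h1 : x = x' := by
        have := hxv; rw [← hw] at this; exact this
      have h2 : y' = x' := by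
        have := hy'v; rw [← hw] at this; exact this
      exact hxy' (h1.trans h2.symm)
    have hlxw : T.leaf x ≠ w := fun h => hwleaf ⟨x, h⟩
    -- the child of w above x in T
    obtain ⟨c, hpc, hcne, hcx, hcmin⟩ := PhyloTree.path_child hwx hlxw
    -- nestedness of cluster u (as a T-cluster) and cluster c
    obtain ⟨u2, hu2⟩ := hcl ⟨u, rfl⟩
    have hxu2 : T.anc u2 (T.leaf x) := by
      have : x ∈ T.cluster u2 := by rw [hu2]; exact hxu
      exact this
    -- choose y not below u (in Tε) and not below c (in T)
    obtain ⟨y, hyv, hyu, hyc⟩ : ∃ y : L, y ∈ Tε.cluster v ∧ y ∉ Tε.cluster u ∧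
        y ∉ T.cluster c := by
      rcases PhyloTree.anc_comparable hxu2 hcx with h | h
      · -- cluster c ⊆ cluster u2 = cluster u : take y'
        refine ⟨y', hy'v, hy'u, fun hy => hy'u ?_⟩
        rw [← hu2]
        exact PhyloTree.cluster_mono h hy
      · -- cluster u ⊆ cluster c : take a sibling in T
        obtain ⟨y, hyw, hyc⟩ := PhyloTree.sibling_leaf hwleaf ⟨hpc, hcne⟩
        refine ⟨y, hw ▸ hyw, fun hy => hyc ?_, hyc⟩
        have : y ∈ T.cluster u2 := by rw [hu2]; exact hy
        exact PhyloTree.cluster_mono h this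
    have hyx : y ≠ x := fun h => hyu (h ▸ hxu)
    have hlcaε : Tε.isLCA y x v := PhyloTree.isLCA_above hxv hyv humin hyu
    have hlcaT : T.isLCA y x w :=
      PhyloTree.isLCA_above hwx (hw ▸ hyv : y ∈ T.cluster w) hcmin hyc
    refine ⟨u, ⟨hpu, hune⟩, ?_⟩
    rw [Finset.eq_empty_iff_forall_notMem]
    intro k hk
    have hkε : k ∈ ε y x :=
      (hexp y x hyx v hlcaε k).mpr ⟨u, ⟨PhyloTree.anc_of_child hpu, hune, hux⟩, hk⟩
    obtain ⟨p, hp, hkp⟩ := (hT y x hyx w hlcaT k).mp hkε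
    rw [hpathT p hp] at hkp
    exact absurd hkp (Finset.notMem_empty k)
  · intro h
    exact ⟨Tε, lamε, hexp, h⟩
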